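/- Let F ≥ 4 and m ≥ 1 be integers. Then the maximum K for which a (K, F, F−2, mF+F−1)-PDA exists equals (m·F·(F−1) + (F−1)·(F−2))/2; i.e., K_{(F,2,mF+F−1)} = m·K_{(F,2,F)} + K_{(F−1,2,F−1)}. -/

import Mathlib

/-- A `(K, F, Z, S)` placement delivery array: an `F × K` array over
`{0, …, S-1} ∪ {*}` (with `none` playing the role of `*`) such that
(1) each integer occurs at most once in each row and in each column,
(2) whenever two distinct cells `(a, b)` and `(c, d)` contain the same
integer, the opposite corners `(a, d)` and `(c, b)` contain `*`, and
(3) the symbol `*` occurs exactly `Z` times in each column. -/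
def IsPDA (K F Z S : ℕ) (P : Fin F → Fin K → Option (Fin S)) : Prop :=
  (∀ (i : Fin F) (j j' : Fin K) (s : Fin S), P i j = some s → P i j' = some s → j = j') ∧
  (∀ (i i' : Fin F) (j : Fin K) (s : Fin S), P i j = some s → P i' j = some s → i = i') ∧
  (∀ (a c : Fin F) (b d : Fin K) (s : Fin S),
      (a, b) ≠ (c, d) → P a b = some s → P c d = some s →
      P a d = none ∧ P c b = none) ∧
  (∀ j : Fin K, (Finset.univ.filter (fun i => P i j = none)).card = Z)

/-- There exists a `(K, F, Z, S)` placement delivery array. -/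
def PDAExists (K F Z S : ℕ) : Prop :=
  ∃ P : Fin F → Fin K → Option (Fin S), IsPDA K F Z S P

/-!
Lower bound: the complete graph on `n` vertices gives an `(n choose 2, n, n - 2, n)`-PDA (rows are
vertices, columns are edges, and the cell of a vertex on an edge holds the other endpoint).
Juxtaposing `m` copies of it for `n = F` with one for `n = F - 1`, padded by an all-`*` row, on
disjoint symbol sets gives the required array.

Upper bound: every column has exactly two filled cells, and by (2) the partner of a cell holding `s`
lies in a row without `s`. So `s` occurs in at most `F - 1` rows, and if it occurs in all rows
but `x`, each of its `F - 1` occurrences is partnered with a distinct filled cell of row `x`. Row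
`x` holds distinct symbols, none of them missing only from `x`, so at most `⌊S / F⌋` symbols miss
only row `x`. Counting filled cells by symbols gives `2K ≤ S (F - 2) + F ⌊S / F⌋`.
-/

open Finset

/-- `IsPDA` with rows, columns and symbols indexed by arbitrary finite types. -/
structure IsPDAOn {ι κ σ : Type*} [Fintype ι] (Z : ℕ) (P : ι → κ → Option σ) : Prop where
  row_inj : ∀ i j j' s, P i j = some s → P i j' = some s → j = j'
  col_inj : ∀ i i' j s, P i j = some s → P i' j = some s → i = i'
  star : ∀ a c b d s, (a, b) ≠ (c, d) → P a b = some s → P c d = some s →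
    P a d = none ∧ P c b = none
  card_star : ∀ j, #{i | P i j = none} = Z

theorem isPDA_iff_isPDAOn {K F Z S : ℕ} {P : Fin F → Fin K → Option (Fin S)} :
    IsPDA K F Z S P ↔ IsPDAOn Z P :=
  ⟨fun ⟨h₁, h₂, h₃, h₄⟩ => ⟨h₁, h₂, h₃, h₄⟩, fun ⟨h₁, h₂, h₃, h₄⟩ => ⟨h₁, h₂, h₃, h₄⟩⟩

namespace IsPDAOn

variable {ι κ σ : Type*} [Fintype ι] {Z : ℕ} {P : ι → κ → Option σ}

theorem reindex {ι' κ' σ' : Type*} [Fintype ι'] (hP : IsPDAOn Z P)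
    (eι : ι ≃ ι') (eκ : κ ≃ κ') (eσ : σ ≃ σ') :
    IsPDAOn Z fun i j => (P (eι.symm i) (eκ.symm j)).map eσ := by
  have map_eq_some : ∀ (o : Option σ) s, o.map eσ = some s ↔ o = some (eσ.symm s) := by
    intro o s
    cases o <;> simp [Equiv.eq_symm_apply]
  refine ⟨fun i j j' s h h' => ?_, fun i i' j s h h' => ?_, fun a c b d s hne h h' => ?_,
    fun j => ?_⟩
  · rw [map_eq_some] at h h'
    exact eκ.symm.injective (hP.row_inj _ _ _ _ h h')
  · rw [map_eq_some] at h h'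
    exact eι.symm.injective (hP.col_inj _ _ _ _ h h')
  · rw [map_eq_some] at h h'
    simp only [Option.map_eq_none_iff]
    exact hP.star _ _ _ _ _ (by simpa [Prod.ext_iff] using hne) h h'
  · simp only [Option.map_eq_none_iff]
    rw [← hP.card_star (eκ.symm j)]
    exact card_equiv eι.symm (by simp)

theorem pdaExists [Fintype κ] [Fintype σ] (hP : IsPDAOn Z P) :
    PDAExists (Fintype.card κ) (Fintype.card ι) Z (Fintype.card σ) :=
  ⟨_, isPDA_iff_isPDAOn.2 <|
    hP.reindex (Fintype.equivFin ι) (Fintype.equivFin κ) (Fintype.equivFin σ)⟩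

theorem addStarRow (hP : IsPDAOn Z P) :
    IsPDAOn (Z + 1) fun (i : Option ι) j => i.elim none (P · j) where
  row_inj := by
    rintro (_ | i) j j' s h h'
    · simp at h
    · exact hP.row_inj i j j' s h h'
  col_inj := by
    rintro (_ | i) (_ | i') j s h h' <;> simp at h h'
    rw [hP.col_inj i i' j s h h']
  star := by
    rintro (_ | a) (_ | c) b d s hne h h' <;> simp at h h'
    exact hP.star a c b d s (by simpa using hne) h h'
  card_star j := by
    rw [card_filter, Fintype.sum_option, ← hP.card_star j, card_filter]
    simp only [Option.elim_none, Option.elim_some, ↓reduceIte]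
    exact add_comm _ _

theorem append {κ' σ' : Type*} {Q : ι → κ' → Option σ'}
    (hP : IsPDAOn Z P) (hQ : IsPDAOn Z Q) :
    IsPDAOn Z fun i => Sum.elim (fun j => (P i j).map Sum.inl) (fun j => (Q i j).map Sum.inr) where
  row_inj := by
    rintro i (j | j) (j' | j') (s | s) h h' <;> simp at h h' ⊢
    · exact hP.row_inj i j j' s h h'
    · exact hQ.row_inj i j j' s h h'
  col_inj := by
    rintro i i' (j | j) (s | s) h h' <;> simp at h h'
    · exact hP.col_inj i i' j s h h'
    · exact hQ.col_inj i i' j s h h'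
  star := by
    rintro a c (b | b) (d | d) (s | s) hne h h' <;> simp at h h' hne ⊢
    · exact hP.star a c b d s (by simpa using hne) h h'
    · exact hQ.star a c b d s (by simpa using hne) h h'
  card_star := by
    rintro (j | j) <;> simp [hP.card_star, hQ.card_star]

end IsPDAOn

section CompleteGraphArray

variable (α : Type*) [DecidableEq α]

noncomputable def completeGraphArray (i : α) (e : {z : Sym2 α // ¬ z.IsDiag}) : Option α :=
  if h : i ∈ (e : Sym2 α) then some (Sym2.Mem.other h) else none

variable {α}

theorem completeGraphArray_eq_some {i s : α} {e : {z : Sym2 α // ¬ z.IsDiag}} :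
    completeGraphArray α i e = some s ↔ (e : Sym2 α) = s(i, s) := by
  unfold completeGraphArray
  split_ifs with h
  · rw [Option.some_inj]
    exact ⟨fun he => he ▸ (Sym2.other_spec h).symm,
      fun he => Sym2.congr_right.1 ((Sym2.other_spec h).trans he)⟩
  · simp only [false_iff]
    intro he
    exact h (he ▸ Sym2.mem_mk_left i s)

theorem completeGraphArray_eq_none {i : α} {e : {z : Sym2 α // ¬ z.IsDiag}} :
    completeGraphArray α i e = none ↔ i ∉ (e : Sym2 α) := by
  unfold completeGraphArray
  split_ifs with h <;> simp [h]

theorem isPDAOn_completeGraphArray [Fintype α] :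
    IsPDAOn (Fintype.card α - 2) (completeGraphArray α) where
  row_inj i e e' s h h' := by
    rw [completeGraphArray_eq_some] at h h'
    exact Subtype.ext (h.trans h'.symm)
  col_inj i i' e s h h' := by
    rw [completeGraphArray_eq_some] at h h'
    exact Sym2.congr_left.1 (h.symm.trans h')
  star a c e e' s hne h h' := by
    rw [completeGraphArray_eq_some] at h h'
    have hac : a ≠ c := by
      rintro rfl
      exact hne (by rw [Subtype.ext (h.trans h'.symm)])
    have has : a ≠ s := fun has => e.2 (by rw [h, has]; rfl)
    have hcs : c ≠ s := fun hcs => e'.2 (by rw [h', hcs]; rfl)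
    simp [completeGraphArray_eq_none, h, h', hac, hac.symm, has, hcs]
  card_star e := by
    obtain ⟨z, hz⟩ := e
    induction z using Sym2.ind with
    | _ a b =>
      have hab : a ≠ b := by simpa using hz
      have : ({i | completeGraphArray α i ⟨s(a, b), hz⟩ = none} : Finset α) = univ \ {a, b} := by
        ext; simp [completeGraphArray_eq_none]
      rw [this, card_sdiff_of_subset (subset_univ _), card_pair hab, card_univ]

end CompleteGraphArray

theorem pdaExists_choose_two (n : ℕ) : PDAExists (n.choose 2) n (n - 2) n := by
  have h := (isPDAOn_completeGraphArray (α := Fin n)).pdaExists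
  rwa [Sym2.card_subtype_not_diag, Fintype.card_fin] at h

namespace PDAExists

variable {K K' F Z S S' : ℕ}

theorem addStarRow : PDAExists K F Z S → PDAExists K (F + 1) (Z + 1) S := by
  rintro ⟨P, hP⟩
  simpa using (isPDA_iff_isPDAOn.1 hP).addStarRow.pdaExists

theorem add : PDAExists K F Z S → PDAExists K' F Z S' → PDAExists (K + K') F Z (S + S') := by
  rintro ⟨P, hP⟩ ⟨Q, hQ⟩
  simpa using ((isPDA_iff_isPDAOn.1 hP).append (isPDA_iff_isPDAOn.1 hQ)).pdaExists

end PDAExists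

theorem pdaExists_mul_choose_two_add (m : ℕ) {F : ℕ} (hF : 3 ≤ F) :
    PDAExists (m * F.choose 2 + (F - 1).choose 2) F (F - 2) (m * F + (F - 1)) := by
  induction m with
  | zero =>
    convert (pdaExists_choose_two (F - 1)).addStarRow using 1 <;> omega
  | succ m ih =>
    convert (pdaExists_choose_two F).add ih using 1 <;> ring

section UpperBound

variable {ι κ σ : Type*} [Fintype ι] {Z : ℕ} {P : ι → κ → Option σ}

theorem IsPDAOn.card_filled_eq_two (hP : IsPDAOn (Fintype.card ι - 2) P)
    (hι : 2 ≤ Fintype.card ι) (j : κ) : #{i | P i j ≠ none} = 2 := by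
  have := card_filter_add_card_filter_not (s := univ) (p := fun i => P i j = none)
  simp only [hP.card_star, card_univ, ne_eq] at this ⊢
  omega

theorem exists_ne_of_card_filled_eq_two {j : κ} (h2 : #{i | P i j ≠ none} = 2) (y : ι) :
    ∃ z ≠ y, P z j ≠ none := by
  obtain ⟨z, hz, hzy⟩ := exists_mem_ne (h2 ▸ one_lt_two) y
  exact ⟨z, hzy, (mem_filter.1 hz).2⟩

theorem eq_of_card_filled_eq_two {j : κ} (h2 : #{i | P i j ≠ none} = 2) {x y z : ι}
    (hx : P x j ≠ none) (hy : P y j ≠ none) (hz : P z j ≠ none) (hxy : x ≠ y) (hxz : x ≠ z) :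
    y = z := by
  by_contra hyz
  have := two_lt_card_iff (s := {i | P i j ≠ none}) |>.2
    ⟨x, y, z, by simpa, by simpa, by simpa, hxy, hxz, hyz⟩
  omega

variable [Fintype κ] [DecidableEq σ]

def symbolRows (P : ι → κ → Option σ) (s : σ) : Finset ι := {y | ∃ j, P y j = some s}

theorem mem_symbolRows {y : ι} {s : σ} : y ∈ symbolRows P s ↔ ∃ j, P y j = some s := by
  simp [symbolRows]

theorem IsPDAOn.notMem_symbolRows (hP : IsPDAOn Z P) {y z : ι} {j : κ} {s : σ}
    (hy : P y j = some s) (hz : P z j ≠ none) (hzy : z ≠ y) : z ∉ symbolRows P s := by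
  rw [mem_symbolRows]
  rintro ⟨j', hz'⟩
  exact hz (hP.star y z j j' s (fun h => hzy (congrArg Prod.fst h).symm) hy hz').2

theorem IsPDAOn.card_filled_row_le [Fintype σ] (hP : IsPDAOn Z P) (x : ι) :
    #{j | P x j ≠ none} ≤ #{s | ∃ j, P x j = some s} := by
  refine card_le_card_of_forall_subsingleton (fun j s => P x j = some s) (fun j hj => ?_)
    fun s _ j ⟨_, hj⟩ j' ⟨_, hj'⟩ => hP.row_inj x j j' s hj hj'
  obtain ⟨s, hs⟩ := Option.ne_none_iff_exists'.1 (mem_filter.1 hj).2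
  exact ⟨s, mem_filter.2 ⟨mem_univ s, j, hs⟩, hs⟩

variable [DecidableEq ι]

def symbolsMissingOnly [Fintype σ] (P : ι → κ → Option σ) (x : ι) : Finset σ :=
  {s | symbolRows P s = univ.erase x}

theorem mem_symbolsMissingOnly [Fintype σ] {x : ι} {s : σ} :
    s ∈ symbolsMissingOnly P x ↔ symbolRows P s = univ.erase x := by
  simp [symbolsMissingOnly]

theorem IsPDAOn.card_symbolRows_le (hP : IsPDAOn Z P) (h2 : ∀ j, #{i | P i j ≠ none} = 2)
    (s : σ) : #(symbolRows P s) ≤ Fintype.card ι - 2 + #{x | symbolRows P s = univ.erase x} := by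
  by_cases hle : #(symbolRows P s) ≤ Fintype.card ι - 2
  · omega
  obtain ⟨y, hy⟩ : (symbolRows P s).Nonempty := card_pos.1 (by omega)
  obtain ⟨j, hyj⟩ := mem_symbolRows.1 hy
  obtain ⟨z, hzy, hz⟩ := exists_ne_of_card_filled_eq_two (h2 j) y
  have hzs := hP.notMem_symbolRows hyj hz hzy
  have hsub : symbolRows P s ⊆ univ.erase z :=
    fun x hx => mem_erase.2 ⟨fun h => hzs (h ▸ hx), mem_univ x⟩
  have hcard : #(univ.erase z) = Fintype.card ι - 1 := by simp
  have heq : symbolRows P s = univ.erase z := eq_of_subset_of_card_le hsub (by omega)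
  have : 0 < #{x | symbolRows P s = univ.erase x} := card_pos.2 ⟨z, by simp [heq]⟩
  have := card_le_card hsub
  omega

theorem IsPDAOn.sub_one_mul_card_symbolsMissingOnly_le [Fintype σ] (hP : IsPDAOn Z P)
    (h2 : ∀ j, #{i | P i j ≠ none} = 2) (x : ι) :
    (Fintype.card ι - 1) * #(symbolsMissingOnly P x) ≤ #{j | P x j ≠ none} := by
  have hcard : #(univ.erase x ×ˢ symbolsMissingOnly P x)
      = (Fintype.card ι - 1) * #(symbolsMissingOnly P x) := by
    simp [card_product]
  rw [← hcard]
  refine card_le_card_of_forall_subsingleton (fun ys j => P ys.1 j = some ys.2)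
    (fun ⟨y, s⟩ hys => ?_) fun j hj ⟨y, s⟩ ⟨hys, hj₁⟩ ⟨y', s'⟩ ⟨hys', hj₂⟩ => ?_
  · simp only [mem_product, mem_erase, mem_symbolsMissingOnly, mem_univ, and_true] at hys
    obtain ⟨j, hyj⟩ := mem_symbolRows.1 (hys.2 ▸ mem_erase.2 ⟨hys.1, mem_univ y⟩)
    obtain ⟨z, hzy, hz⟩ := exists_ne_of_card_filled_eq_two (h2 j) y
    have hzx : z = x := by
      by_contra hzx
      exact hP.notMem_symbolRows hyj hz hzy (hys.2 ▸ mem_erase.2 ⟨hzx, mem_univ z⟩)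
    exact ⟨j, mem_filter.2 ⟨mem_univ j, hzx ▸ hz⟩, hyj⟩
  · simp only [mem_product, mem_erase, mem_univ, and_true] at hys hys'
    simp only at hj₁ hj₂
    have hyy' : y = y' := eq_of_card_filled_eq_two (h2 j) (mem_filter.1 hj).2 (by simp [hj₁])
      (by simp [hj₂]) (Ne.symm hys.1) (Ne.symm hys'.1)
    subst hyy'
    rw [Prod.mk.injEq]
    exact ⟨rfl, Option.some_inj.1 (hj₁.symm.trans hj₂)⟩

theorem IsPDAOn.card_mul_card_symbolsMissingOnly_le [Fintype σ] (hP : IsPDAOn Z P)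
    (h2 : ∀ j, #{i | P i j ≠ none} = 2) (x : ι) :
    Fintype.card ι * #(symbolsMissingOnly P x) ≤ Fintype.card σ := by
  have hmissing := hP.sub_one_mul_card_symbolsMissingOnly_le h2 x
  have hrow := hP.card_filled_row_le x
  have hdisj : Disjoint ({s | ∃ j, P x j = some s} : Finset σ) (symbolsMissingOnly P x) := by
    refine disjoint_left.2 fun s hs hM => ?_
    have hx : x ∈ symbolRows P s := mem_symbolRows.2 (mem_filter.1 hs).2
    simp [mem_symbolsMissingOnly.1 hM] at hx
  have hunion := card_le_univ (({s | ∃ j, P x j = some s} : Finset σ) ∪ symbolsMissingOnly P x)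
  rw [card_union_of_disjoint hdisj] at hunion
  obtain ⟨n, hn⟩ : ∃ n, Fintype.card ι = n + 1 :=
    Nat.exists_eq_add_one.2 (Fintype.card_pos_iff.2 ⟨x⟩)
  rw [hn, Nat.add_sub_cancel] at hmissing
  rw [hn, add_one_mul]
  omega

theorem IsPDAOn.two_mul_card_le [Fintype σ] (hP : IsPDAOn (Fintype.card ι - 2) P)
    (hι : 2 ≤ Fintype.card ι) :
    2 * Fintype.card κ ≤ Fintype.card σ * (Fintype.card ι - 2)
      + Fintype.card ι * (Fintype.card σ / Fintype.card ι) := by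
  have h2 := hP.card_filled_eq_two hι
  calc 2 * Fintype.card κ = ∑ j, #{i | P i j ≠ none} := by simp [h2, mul_comm]
    _ = ∑ i, #{j | P i j ≠ none} := by simp only [card_filter]; exact sum_comm
    _ ≤ ∑ i, #{s | ∃ j, P i j = some s} := sum_le_sum fun x _ => hP.card_filled_row_le x
    _ = ∑ s, #(symbolRows P s) := by simp only [symbolRows, card_filter]; exact sum_comm
    _ ≤ ∑ s, (Fintype.card ι - 2 + #{x | symbolRows P s = univ.erase x}) :=
        sum_le_sum fun s _ => hP.card_symbolRows_le h2 s
    _ = Fintype.card σ * (Fintype.card ι - 2) + ∑ x, #(symbolsMissingOnly P x) := by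
        rw [sum_add_distrib, sum_const, card_univ, smul_eq_mul]
        congr 1
        simp only [symbolsMissingOnly, card_filter]
        exact sum_comm
    _ ≤ Fintype.card σ * (Fintype.card ι - 2)
          + Fintype.card ι * (Fintype.card σ / Fintype.card ι) := by
        gcongr
        refine (sum_le_card_nsmul univ _ (Fintype.card σ / Fintype.card ι) fun x _ => ?_).trans_eq
          (by simp)
        exact (Nat.le_div_iff_mul_le (by omega)).2 (by
          rw [mul_comm]; exact hP.card_mul_card_symbolsMissingOnly_le h2 x)

end UpperBound

theorem PDAExists.two_mul_le {K F S : ℕ} (h : PDAExists K F (F - 2) S) (hF : 2 ≤ F) :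
    2 * K ≤ S * (F - 2) + F * (S / F) := by
  obtain ⟨P, hP⟩ := h
  have hP' : IsPDAOn (Fintype.card (Fin F) - 2) P := by
    rw [Fintype.card_fin]
    exact isPDA_iff_isPDAOn.1 hP
  simpa using hP'.two_mul_card_le (by simpa using hF)

theorem two_mul_choose_two (n : ℕ) : 2 * n.choose 2 = n * (n - 1) := by
  rw [Nat.choose_two_right, Nat.two_mul_div_two_of_even (Nat.even_mul_pred_self n)]

theorem pda_optimal_S_eq_mF_add_F_sub_one_general (F m : ℕ) (hF : 4 ≤ F) :
    IsGreatest {K : ℕ | PDAExists K F (F - 2) (m * F + F - 1)}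
      ((m * F * (F - 1) + (F - 1) * (F - 2)) / 2) := by
  have hval : (m * F * (F - 1) + (F - 1) * (F - 2)) / 2 = m * F.choose 2 + (F - 1).choose 2 := by
    refine Nat.div_eq_of_eq_mul_right two_pos ?_
    rw [mul_add, mul_left_comm, two_mul_choose_two, two_mul_choose_two, Nat.sub_sub, mul_assoc]
  have hdiv : (m * F + F - 1) / F = m :=
    Nat.div_eq_of_lt_le (by omega) (by rw [add_one_mul]; omega)
  have hbound : (m * F + F - 1) * (F - 2) + F * m = m * F * (F - 1) + (F - 1) * (F - 2) := by
    obtain ⟨n, rfl⟩ : ∃ n, F = n + 2 := ⟨F - 2, by omega⟩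
    rw [show m * (n + 2) + (n + 2) - 1 = m * (n + 2) + n + 1 by omega]
    simp only [Nat.add_sub_cancel, Nat.add_succ_sub_one]
    ring
  constructor
  · rw [Set.mem_ofPred_eq, hval, Nat.add_sub_assoc (by omega : 1 ≤ F)]
    exact pdaExists_mul_choose_two_add m (by omega)
  · intro K hK
    have h2K := hK.two_mul_le (by omega)
    rw [hdiv, hbound] at h2K
    exact (Nat.le_div_iff_mul_le two_pos).2 (by linarith)

theorem pda_optimal_S_eq_mF_add_F_sub_one (F m : ℕ) (hF : 4 ≤ F) (hm : 1 ≤ m) :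
    IsGreatest {K : ℕ | PDAExists K F (F - 2) (m * F + F - 1)}
      ((m * F * (F - 1) + (F - 1) * (F - 2)) / 2) :=
  pda_optimal_S_eq_mF_add_F_sub_one_general F m hF
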